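/- Let t ≥ 1 and Q_t = {1, 3, 5, ..., 2t−1} \ {t, t+1}. A self-conjugate partition λ lies in DS(t) if and only if its set MD(λ) of main diagonal hook lengths satisfies: (i) MD(λ) ⊆ Q_t; (ii) any two distinct elements of MD(λ) differ by at least 4; (iii) no two elements h1, h2 of MD(λ) satisfy h1 + h2 = 2t or h1 + h2 = 2t + 2. -/

import Mathlib

/-- An integer partition, given by its (weakly decreasing, eventually zero)
sequence of parts, indexed from `0`. -/
structure IntPartition where
  parts : ℕ → ℕ
  antitone : ∀ i j, i ≤ j → parts j ≤ parts i
  finite : ∃ N, ∀ i, N ≤ i → parts i = 0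

namespace IntPartition

/-- The size of a partition: the sum of its parts. -/
noncomputable def size (lam : IntPartition) : ℕ := ∑ᶠ i, lam.parts i

/-- The parts of the conjugate partition: `conjParts lam j` is the number of
rows `i` with `lam.parts i > j` (rows and columns are `0`-indexed). -/
noncomputable def conjParts (lam : IntPartition) (j : ℕ) : ℕ :=
  Nat.card {i : ℕ | j < lam.parts i}

/-- A partition is self-conjugate if it equals its conjugate. -/
def IsSelfConjugate (lam : IntPartition) : Prop :=
  ∀ j, lam.conjParts j = lam.parts j

/-- `(i, j)` (both `0`-indexed) is a cell of the Young diagram of `lam`. -/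
def IsCell (lam : IntPartition) (i j : ℕ) : Prop := j < lam.parts i

/-- The hook length of the cell `(i, j)` (both `0`-indexed): the number of
cells directly to the right, plus the number directly below, plus one. -/
noncomputable def hook (lam : IntPartition) (i j : ℕ) : ℕ :=
  (lam.parts i - j) + (lam.conjParts j - i) - 1

/-- A partition is a `t`-core if no hook length is divisible by `t`. -/
def IsCore (lam : IntPartition) (t : ℕ) : Prop :=
  ∀ i j, lam.IsCell i j → ¬ (t ∣ lam.hook i j)

/-- The size of the Durfee square: the largest `k` such that the partition has
at least `k` parts of size at least `k`. -/
noncomputable def durfee (lam : IntPartition) : ℕ :=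
  Nat.card {i : ℕ | i < lam.parts i}

/-- A partition has distinct parts if its (nonzero) parts are pairwise different. -/
def DistinctParts (lam : IntPartition) : Prop :=
  ∀ i j, lam.parts i ≠ 0 → lam.parts j ≠ 0 → i ≠ j → lam.parts i ≠ lam.parts j

/-- The set of main diagonal hook lengths of `lam`. -/
noncomputable def MD (lam : IntPartition) : Set ℕ :=
  {h | ∃ i < lam.durfee, lam.hook i i = h}

/-- `lam ∈ DS(t)`: `lam` is a self-conjugate `(t, t+1)`-core partition whose
first `durfee lam` parts are pairwise distinct. -/
def InDS (lam : IntPartition) (t : ℕ) : Prop :=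
  lam.IsSelfConjugate ∧ lam.IsCore t ∧ lam.IsCore (t + 1) ∧
    ∀ i j, i < lam.durfee → j < lam.durfee → i ≠ j → lam.parts i ≠ lam.parts j

end IntPartition

/-!
Write `a i = parts i - i` for rows `i` in the Durfee square. For a self-conjugate partition the
diagonal hooks are `2 a i - 1`, the hook at `(i, j)` inside the square is `a i + a j - 1`, and a
hook in row `i` outside the square is smaller than `a i`. So if every `a i ≤ t` and no sum
`a i + a j` is `t + 1` or `t + 2`, all hooks are below `2 t` and avoid `t` and `t + 1`.

Conversely, if the hook length `u` is missing from row `i`, then `a i - u` is again some `a k`: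
otherwise a column beyond the square has exactly the length that realizes the hook `u`. For a row
with `a i > t`, applying this with `u = t` and `u = t + 1` gives either a hook `t + 1` or two
values `a k = a l + 1`, i.e. a repeated part.
-/

theorem IsLowerSet.eq_Iio_natCard {S : Set ℕ} (hS : IsLowerSet S) (hfin : S.Finite) :
    S = Set.Iio (Nat.card S) := by
  rcases hS.eq_univ_or_Iio with rfl | ⟨a, rfl⟩
  · exact absurd hfin Set.infinite_univ
  · rw [Nat.card_coe_set_eq, Set.ncard_Iio_nat]

namespace IntPartition

variable (lam : IntPartition) {i j : ℕ}

theorem finite_support : (Function.support lam.parts).Finite := by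
  obtain ⟨N, hN⟩ := lam.finite
  exact (Set.finite_Iio N).subset fun i hi => by
    by_contra h
    exact hi (hN i (not_lt.1 h))

theorem lt_conjParts_iff : i < lam.conjParts j ↔ j < lam.parts i := by
  have hrows : {i | j < lam.parts i} = Set.Iio (lam.conjParts j) :=
    IsLowerSet.eq_Iio_natCard (fun a b hba ha => lt_of_lt_of_le ha (lam.antitone b a hba))
      (lam.finite_support.subset fun i (hi : j < lam.parts i) => Nat.ne_zero_of_lt hi)
  exact (Set.ext_iff.1 hrows i).symm

theorem lt_durfee_iff : i < lam.durfee ↔ i < lam.parts i := by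
  have hrows : {i | i < lam.parts i} = Set.Iio lam.durfee :=
    IsLowerSet.eq_Iio_natCard
      (fun a b hba ha => lt_of_le_of_lt hba (lt_of_lt_of_le ha (lam.antitone b a hba)))
      (lam.finite_support.subset fun i (hi : i < lam.parts i) => Nat.ne_zero_of_lt hi)
  exact (Set.ext_iff.1 hrows i).symm

variable {lam}

theorem IsCell.hook_pos (h : lam.IsCell i j) : 0 < lam.hook i j := by
  have hcol := (lt_conjParts_iff lam).2 h
  have hrow : j < lam.parts i := h
  unfold hook
  omega

theorem isCell_of_lt_durfee (hi : i < lam.durfee) (hj : j < lam.durfee) : lam.IsCell i j := by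
  rw [lt_durfee_iff] at hi hj
  rcases le_total i j with hij | hji
  · exact lt_of_lt_of_le hj (lam.antitone i j hij)
  · exact lt_of_le_of_lt hji hi

/-- `parts k + i + y = parts i + k` says `parts k - k = parts i - i - y` without truncated
subtraction. -/
theorem exists_hook_eq {y : ℕ} (hy : i + y < lam.parts i)
    (hrows : ∀ k, lam.parts k + i + y ≠ lam.parts i + k) :
    ∃ j, lam.IsCell i j ∧ lam.hook i j = y := by
  obtain ⟨c, hc⟩ : ∃ c, lam.parts i = i + y + c + 1 := ⟨lam.parts i - i - y - 1, by omega⟩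
  obtain ⟨w, hw⟩ : ∃ w, ∀ k, k + c + 2 ≤ lam.parts k ↔ k < w := ⟨_, fun k => Set.ext_iff.1
    (IsLowerSet.eq_Iio_natCard
      (fun a b (hba : b ≤ a) (ha : a + c + 2 ≤ lam.parts a) =>
        show b + c + 2 ≤ lam.parts b by have := lam.antitone b a hba; omega)
      (lam.finite_support.subset fun k (hk : k + c + 2 ≤ lam.parts k) =>
        show lam.parts k ≠ 0 by omega)) k⟩
  -- Column `c + w` has exactly `w` cells, as no row `k` has `parts k = k + c + 1`.
  have hcol : lam.conjParts (c + w) = w := by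
    refine eq_of_forall_lt_iff fun k => ?_
    rw [lt_conjParts_iff]
    have hw_row := hrows w
    have hlast := (hw (w - 1)).2
    have hnext := (hw w).not.2 (lt_irrefl w)
    have := lam.antitone k (w - 1)
    have := lam.antitone w k
    omega
  have hy0 := hrows i
  have hi : i < w := (hw i).1 (by omega)
  have hcell : lam.IsCell i (c + w) := (lt_conjParts_iff lam).1 (by rw [hcol]; exact hi)
  refine ⟨c + w, hcell, ?_⟩
  have hcell' : c + w < lam.parts i := hcell
  unfold hook
  rw [hcol]
  omega

/-- Along the Durfee square `parts k - k` drops by at least one per row, and by exactly one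
where a part repeats. -/
theorem parts_distinct_on_durfee_iff :
    (∀ i j, i < lam.durfee → j < lam.durfee → i ≠ j → lam.parts i ≠ lam.parts j) ↔
      ∀ i < lam.durfee, ∀ j < lam.durfee, lam.parts i - i ≠ lam.parts j - j + 1 := by
  constructor
  · intro hdist i hi j hj heq
    have := (lt_durfee_iff lam).1 hi
    have := (lt_durfee_iff lam).1 hj
    rcases lt_trichotomy i j with hij | rfl | hji
    · have := lam.antitone i j hij.le
      exact hdist i j hi hj hij.ne (by omega)
    · omega
    · have := lam.antitone j i hji.le
      omega
  · intro hgap i j hi hj hne heq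
    wlog hij : i < j generalizing i j
    · exact this j i hj hi hne.symm heq.symm (by omega)
    have := (lt_durfee_iff lam).1 (lt_of_le_of_lt hij hj : i + 1 < lam.durfee)
    have := lam.antitone i (i + 1) (Nat.le_succ i)
    have := lam.antitone (i + 1) j hij
    exact hgap i (by omega) (i + 1) (lt_of_le_of_lt hij hj) (by omega)

theorem IsCore.exists_parts_add_eq {u : ℕ} (hcore : lam.IsCore u) (hi : i + u < lam.parts i) :
    ∃ k, lam.parts k + i + u = lam.parts i + k := by
  by_contra! hrows
  obtain ⟨j, hj, hhook⟩ := lam.exists_hook_eq hi hrows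
  exact hcore i j hj (hhook ▸ dvd_refl u)

namespace IsSelfConjugate

variable (hsc : lam.IsSelfConjugate)
include hsc

theorem isCell_comm : lam.IsCell i j ↔ lam.IsCell j i := by
  rw [IsCell, ← lt_conjParts_iff, hsc j, IsCell]

theorem hook_add (h : lam.IsCell i j) : lam.hook i j + i + j + 1 = lam.parts i + lam.parts j := by
  have h' := hsc.isCell_comm.1 h
  unfold hook IsCell at *
  rw [hsc j]
  omega

theorem hook_add_one_of_lt_durfee (hi : i < lam.durfee) (hj : j < lam.durfee) :
    lam.hook i j + 1 = (lam.parts i - i) + (lam.parts j - j) := by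
  have := hsc.hook_add (isCell_of_lt_durfee hi hj)
  have := (lt_durfee_iff lam).1 hi
  have := (lt_durfee_iff lam).1 hj
  omega

theorem parts_sub_add_ne_of_isCore {u : ℕ} (hcore : lam.IsCore u) (hi : i < lam.durfee)
    (hj : j < lam.durfee) : lam.parts i - i + (lam.parts j - j) ≠ u + 1 := fun h =>
  hcore i j (isCell_of_lt_durfee hi hj)
    (by rw [show lam.hook i j = u by have := hsc.hook_add_one_of_lt_durfee hi hj; omega])

theorem parts_sub_le_of_isCore {t : ℕ} (hcore : lam.IsCore t) (hcore' : lam.IsCore (t + 1))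
    (hdist : ∀ i < lam.durfee, ∀ j < lam.durfee, lam.parts i - i ≠ lam.parts j - j + 1)
    (hi : i < lam.durfee) : lam.parts i - i ≤ t := by
  by_contra! hlt
  have := (lt_durfee_iff lam).1 hi
  obtain ⟨k, hk⟩ := hcore.exists_parts_add_eq (by omega : i + t < lam.parts i)
  have hkd : k < lam.durfee := (lt_durfee_iff lam).2 (by omega)
  rcases (by omega : lam.parts i - i = t + 1 ∨ t + 2 ≤ lam.parts i - i) with heq | hge
  · exact hsc.parts_sub_add_ne_of_isCore hcore' hi hkd (by omega)
  · obtain ⟨l, hl⟩ := hcore'.exists_parts_add_eq (by omega : i + (t + 1) < lam.parts i)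
    have hld : l < lam.durfee := (lt_durfee_iff lam).2 (by omega)
    exact hdist k hkd l hld (by omega)

theorem isCore {u : ℕ} (hle : ∀ i < lam.durfee, lam.parts i - i ≤ u)
    (hne : ∀ i < lam.durfee, ∀ j < lam.durfee, lam.parts i - i + (lam.parts j - j) ≠ u + 1) :
    lam.IsCore u := by
  intro i j hij hdvd
  have hhook := hsc.hook_add hij
  have hi := lam.lt_durfee_iff (i := i)
  have hj := lam.lt_durfee_iff (i := j)
  have hbound : lam.hook i j < 2 * u ∧ lam.hook i j ≠ u := by
    rcases lt_or_ge i lam.durfee with hid | hid <;> rcases lt_or_ge j lam.durfee with hjd | hjd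
    · have := hle i hid; have := hle j hjd; have := hne i hid j hjd; omega
    · have := hle i hid; omega
    · have := hle j hjd; omega
    · omega
  exact hbound.2 (Nat.eq_of_dvd_of_lt_two_mul hij.hook_pos.ne' hdvd hbound.1)

end IsSelfConjugate

theorem forall_mem_MD {P : ℕ → Prop} :
    (∀ h ∈ lam.MD, P h) ↔ ∀ i < lam.durfee, P (lam.hook i i) := by
  simp only [MD, Set.mem_ofPred_eq, forall_exists_index, and_imp, forall_apply_eq_imp_iff₂]

end IntPartition

open IntPartition in
theorem inDS_iff_general (t : ℕ) (lam : IntPartition)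
    (hsc : lam.IsSelfConjugate) :
    lam.InDS t ↔
      (lam.MD ⊆ {h : ℕ | Odd h ∧ h ≤ 2 * t - 1 ∧ h ≠ t ∧ h ≠ t + 1} ∧
        (∀ h₁ ∈ lam.MD, ∀ h₂ ∈ lam.MD, h₂ < h₁ → 4 ≤ h₁ - h₂) ∧
        ∀ h₁ ∈ lam.MD, ∀ h₂ ∈ lam.MD, h₁ + h₂ ≠ 2 * t ∧ h₁ + h₂ ≠ 2 * t + 2) := by
  have hdiag i (hi : i < lam.durfee) :
      lam.hook i i + 1 = 2 * (lam.parts i - i) ∧ i < lam.parts i :=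
    ⟨by rw [hsc.hook_add_one_of_lt_durfee hi hi, two_mul], (lt_durfee_iff lam).1 hi⟩
  simp only [InDS, hsc, true_and, Set.subset_def, forall_mem_MD, Set.mem_ofPred_eq,
    parts_distinct_on_durfee_iff]
  constructor
  · rintro ⟨hcore, hcore', hdist⟩
    have hle : ∀ i < lam.durfee, lam.parts i - i ≤ t := fun i hi =>
      hsc.parts_sub_le_of_isCore hcore hcore' hdist hi
    have hne u (hcore : lam.IsCore u) i (hi : i < lam.durfee) j (hj : j < lam.durfee) :=
      hsc.parts_sub_add_ne_of_isCore hcore hi hj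
    refine ⟨fun i hi => ?_, fun i hi j hj _ => ?_, fun i hi j hj => ?_⟩
    · have := hdiag i hi; have := hle i hi
      have := hne t hcore i hi i hi; have := hne (t + 1) hcore' i hi i hi
      exact ⟨⟨lam.parts i - i - 1, by omega⟩, by omega, by omega, by omega⟩
    · have := hdiag i hi; have := hdiag j hj; have := hdist i hi j hj; omega
    · have := hdiag i hi; have := hdiag j hj
      have := hne t hcore i hi j hj; have := hne (t + 1) hcore' i hi j hj
      omega
  · rintro ⟨hQ, hgap, hsum⟩
    have hle i (hi : i < lam.durfee) : lam.parts i - i ≤ t := by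
      have := hdiag i hi; have := (hQ i hi).2.1; omega
    have hsum' i (hi : i < lam.durfee) j (hj : j < lam.durfee) :
        lam.parts i - i + (lam.parts j - j) ≠ t + 1 ∧
          lam.parts i - i + (lam.parts j - j) ≠ t + 1 + 1 := by
      have := hdiag i hi; have := hdiag j hj; have := hsum i hi j hj; omega
    refine ⟨hsc.isCore hle fun i hi j hj => (hsum' i hi j hj).1,
      hsc.isCore (fun i hi => (hle i hi).trans t.le_succ) fun i hi j hj => (hsum' i hi j hj).2,
      fun i hi j hj => ?_⟩
    have := hdiag i hi; have := hdiag j hj; have := hgap i hi j hj; omega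

/-- Characterization of `DS(t)`: a self-conjugate partition `lam` lies in `DS(t)`
iff `MD lam ⊆ Q_t = {1, 3, …, 2t-1} \ {t, t+1}`, any two distinct elements of
`MD lam` differ by at least `4`, and no two elements of `MD lam` sum to `2t`
or `2t + 2`. -/
theorem inDS_iff (t : ℕ) (ht : 1 ≤ t) (lam : IntPartition)
    (hsc : lam.IsSelfConjugate) :
    lam.InDS t ↔
      (lam.MD ⊆ {h : ℕ | Odd h ∧ h ≤ 2 * t - 1 ∧ h ≠ t ∧ h ≠ t + 1} ∧
        (∀ h₁ ∈ lam.MD, ∀ h₂ ∈ lam.MD, h₂ < h₁ → 4 ≤ h₁ - h₂) ∧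
        ∀ h₁ ∈ lam.MD, ∀ h₂ ∈ lam.MD, h₁ + h₂ ≠ 2 * t ∧ h₁ + h₂ ≠ 2 * t + 2) :=
  inDS_iff_general t lam hsc
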